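/- For any y ∈ [0,1]^N, S ⊆ [N], and positive integer k, if ŷ denotes the output of dependent rounding applied to y, then E[min{k, Σ_{i∈S} ŷ_i}] ≥ k·(1 − exp(−(Σ_{i∈S} y_i)/k)). -/

import Mathlib

/-!
Pointwise, `min(k, Σ_{i∈S} x_i) ≥ k (1 - ∏_{i∈S} (1 - x_i/k))` for `x ∈ [0,1]^S`, by the
Weierstrass product inequality. Writing `1 - x_i/k = (1 - 1/k) + (1/k)(1 - x_i)` and expanding,
the product becomes a nonnegative combination of the products `∏_{i∈T} (1 - ŷ_i)`, which are the
indicators of `{ŷ_i = 0 for all i ∈ T}`. Negative correlation bounds their expectations by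
`∏_{i∈T} (1 - y_i)`, the values under independent rounding, so
`E ∏ (1 - ŷ_i/k) ≤ ∏ (1 - y_i/k) ≤ exp(-Σ y_i / k)`.
-/

open MeasureTheory ProbabilityTheory

theorem Finset.one_sub_sum_le_prod_one_sub {ι : Type*} (s : Finset ι) {f : ι → ℝ}
    (h0 : ∀ i ∈ s, 0 ≤ f i) (h1 : ∀ i ∈ s, f i ≤ 1) :
    1 - ∑ i ∈ s, f i ≤ ∏ i ∈ s, (1 - f i) := by
  classical
  induction s using Finset.induction_on with
  | empty => simp
  | insert a s ha ih =>
    simp only [Finset.mem_insert, forall_eq_or_imp] at h0 h1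
    rw [Finset.sum_insert ha, Finset.prod_insert ha]
    have hs : 0 ≤ ∑ i ∈ s, f i := Finset.sum_nonneg h0.2
    nlinarith [mul_le_mul_of_nonneg_left (ih h0.2 h1.2) (sub_nonneg.2 h1.1)]

theorem Finset.prod_one_sub_le_exp_neg_sum {ι : Type*} (s : Finset ι) {f : ι → ℝ}
    (h1 : ∀ i ∈ s, f i ≤ 1) :
    ∏ i ∈ s, (1 - f i) ≤ Real.exp (-∑ i ∈ s, f i) := by
  rw [← Finset.sum_neg_distrib, Real.exp_sum]
  exact Finset.prod_le_prod (fun i hi => sub_nonneg.2 (h1 i hi))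
    (fun i _ => Real.one_sub_le_exp_neg _)

theorem mul_one_sub_prod_le_min {ι : Type*} (s : Finset ι) {x : ι → ℝ} {k : ℝ} (hk : 0 < k)
    (h0 : ∀ i ∈ s, 0 ≤ x i) (hle : ∀ i ∈ s, x i ≤ k) :
    k * (1 - ∏ i ∈ s, (1 - k⁻¹ * x i)) ≤ min k (∑ i ∈ s, x i) := by
  have hx0 : ∀ i ∈ s, 0 ≤ k⁻¹ * x i := fun i hi => mul_nonneg (inv_nonneg.2 hk.le) (h0 i hi)
  have hx1 : ∀ i ∈ s, k⁻¹ * x i ≤ 1 := fun i hi => (inv_mul_le_one₀ hk).2 (hle i hi)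
  refine le_min ?_ ?_
  · have : 0 ≤ ∏ i ∈ s, (1 - k⁻¹ * x i) := Finset.prod_nonneg fun i hi => sub_nonneg.2 (hx1 i hi)
    nlinarith
  · calc k * (1 - ∏ i ∈ s, (1 - k⁻¹ * x i)) ≤ k * ∑ i ∈ s, k⁻¹ * x i := by
          have := s.one_sub_sum_le_prod_one_sub hx0 hx1
          gcongr
          linarith
      _ = ∑ i ∈ s, x i := by rw [← Finset.mul_sum, mul_inv_cancel_left₀ hk.ne']

theorem Finset.prod_one_sub_mul_eq_sum_powerset {ι R : Type*} [DecidableEq ι] [CommRing R]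
    (s : Finset ι) (a x : ι → R) :
    ∏ i ∈ s, (1 - a i * x i) =
      ∑ t ∈ s.powerset, ((∏ i ∈ t, a i) * ∏ i ∈ s \ t, (1 - a i)) * ∏ i ∈ t, (1 - x i) := by
  have : ∀ i, 1 - a i * x i = a i * (1 - x i) + (1 - a i) := fun i => by ring
  simp only [this]
  rw [Finset.prod_add]
  exact Finset.sum_congr rfl fun t _ => by rw [Finset.prod_mul_distrib]; ring

section RandomVector

variable {Ω ι : Type*} {X : Ω → ι → ℝ}

theorem prod_one_sub_eq_indicator (hX : ∀ ω i, X ω i = 0 ∨ X ω i = 1) (t : Finset ι) :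
    (fun ω => ∏ i ∈ t, (1 - X ω i)) = {ω | ∀ i ∈ t, X ω i = 0}.indicator 1 := by
  ext ω
  by_cases h : ∀ i ∈ t, X ω i = 0
  · rw [Set.indicator_of_mem (show ω ∈ {ω | ∀ i ∈ t, X ω i = 0} from h)]
    exact Finset.prod_eq_one fun i hi => by simp [h i hi]
  · rw [Set.indicator_of_notMem (show ω ∉ {ω | ∀ i ∈ t, X ω i = 0} from h)]
    push Not at h
    obtain ⟨i, hi, hne⟩ := h
    exact Finset.prod_eq_zero hi (by simp [(hX ω i).resolve_left hne])

theorem measurableSet_forall_eq_zero [MeasurableSpace Ω] (hXm : ∀ i, Measurable fun ω => X ω i)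
    (t : Finset ι) :
    MeasurableSet {ω | ∀ i ∈ t, X ω i = 0} := by
  simp only [Set.ofPred_forall]
  exact Finset.measurableSet_biInter t fun i _ => hXm i (measurableSet_singleton 0)

theorem integral_prod_one_sub_mul_le [MeasurableSpace Ω] {μ : Measure Ω} [IsFiniteMeasure μ]
    (hXm : ∀ i, Measurable fun ω => X ω i) (hX : ∀ ω i, X ω i = 0 ∨ X ω i = 1)
    {s : Finset ι} {a p : ι → ℝ} (ha0 : ∀ i ∈ s, 0 ≤ a i) (ha1 : ∀ i ∈ s, a i ≤ 1)
    (hp : ∀ i ∈ s, p i ≤ 1)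
    (hneg : ∀ t ⊆ s, μ {ω | ∀ i ∈ t, X ω i = 0} ≤ ENNReal.ofReal (∏ i ∈ t, (1 - p i))) :
    ∫ ω, ∏ i ∈ s, (1 - a i * X ω i) ∂μ ≤ ∏ i ∈ s, (1 - a i * p i) := by
  classical
  simp only [s.prod_one_sub_mul_eq_sum_powerset a]
  have hint : ∀ t : Finset ι, Integrable (fun ω => ∏ i ∈ t, (1 - X ω i)) μ := fun t => by
    rw [prod_one_sub_eq_indicator hX]
    exact (integrable_const 1).indicator (measurableSet_forall_eq_zero hXm t)
  rw [integral_finsetSum _ fun t _ => (hint t).const_mul _]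
  refine Finset.sum_le_sum fun t ht => ?_
  rw [Finset.mem_powerset] at ht
  rw [integral_const_mul, prod_one_sub_eq_indicator hX,
    integral_indicator_one (measurableSet_forall_eq_zero hXm t)]
  refine mul_le_mul_of_nonneg_left ?_ ?_
  · exact ENNReal.toReal_le_of_le_ofReal
      (Finset.prod_nonneg fun i hi => sub_nonneg.2 (hp i (ht hi))) (hneg t ht)
  · exact mul_nonneg (Finset.prod_nonneg fun i hi => ha0 i (ht hi))
      (Finset.prod_nonneg fun i hi => sub_nonneg.2 (ha1 i (Finset.sdiff_subset hi)))

theorem mul_one_sub_integral_prod_le_integral_min [MeasurableSpace Ω] {μ : Measure Ω}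
    [IsProbabilityMeasure μ] (hXm : ∀ i, Measurable fun ω => X ω i)
    (hX : ∀ ω i, 0 ≤ X ω i ∧ X ω i ≤ 1) (s : Finset ι) {k : ℝ} (hk : 1 ≤ k) :
    k * (1 - ∫ ω, ∏ i ∈ s, (1 - k⁻¹ * X ω i) ∂μ) ≤ ∫ ω, min k (∑ i ∈ s, X ω i) ∂μ := by
  have hk0 : 0 < k := one_pos.trans_le hk
  have hfactor : ∀ ω i, |1 - k⁻¹ * X ω i| ≤ 1 := fun ω i => by
    have h1 : k⁻¹ * X ω i ≤ 1 := mul_le_one₀ (inv_le_one_of_one_le₀ hk) (hX ω i).1 (hX ω i).2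
    have h0 : 0 ≤ k⁻¹ * X ω i := mul_nonneg (inv_nonneg.2 hk0.le) (hX ω i).1
    rw [abs_le]; constructor <;> linarith
  have hprod_int : Integrable (fun ω => ∏ i ∈ s, (1 - k⁻¹ * X ω i)) μ := by
    refine Integrable.of_bound (by fun_prop) 1 (Filter.Eventually.of_forall fun ω => ?_)
    rw [Real.norm_eq_abs, Finset.abs_prod]
    exact Finset.prod_le_one (fun _ _ => abs_nonneg _) fun i _ => hfactor ω i
  have hmin_int : Integrable (fun ω => min k (∑ i ∈ s, X ω i)) μ := by
    refine Integrable.of_bound (by fun_prop) k (Filter.Eventually.of_forall fun ω => ?_)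
    rw [Real.norm_eq_abs, abs_of_nonneg (le_min hk0.le (Finset.sum_nonneg fun i _ => (hX ω i).1))]
    exact min_le_left _ _
  calc k * (1 - ∫ ω, ∏ i ∈ s, (1 - k⁻¹ * X ω i) ∂μ)
      = ∫ ω, k * (1 - ∏ i ∈ s, (1 - k⁻¹ * X ω i)) ∂μ := by
        rw [integral_const_mul, integral_sub (integrable_const 1) hprod_int, integral_const,
          probReal_univ, one_smul]
    _ ≤ ∫ ω, min k (∑ i ∈ s, X ω i) ∂μ :=
      integral_mono ((integrable_const 1).sub hprod_int |>.const_mul _) hmin_int fun ω =>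
        mul_one_sub_prod_le_min s hk0 (fun i _ => (hX ω i).1) (fun i _ => (hX ω i).2.trans hk)

end RandomVector

theorem stmt_14_general {Ω : Type*} [MeasurableSpace Ω] (μ : Measure Ω) [IsProbabilityMeasure μ]
    (N : ℕ) (y : Fin N → ℝ) (hy : ∀ i, y i ∈ Set.Icc (0 : ℝ) 1)
    (yhat : Ω → Fin N → ℝ) (hmeas : Measurable yhat)
    (h01 : ∀ ω i, yhat ω i = 0 ∨ yhat ω i = 1)
    -- (P3) negative correlation
    (hP3 : ∀ T : Finset (Fin N),
      μ {ω | ∀ i ∈ T, yhat ω i = 1} ≤ ENNReal.ofReal (∏ i ∈ T, y i) ∧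
      μ {ω | ∀ i ∈ T, yhat ω i = 0} ≤ ENNReal.ofReal (∏ i ∈ T, (1 - y i)))
    (S : Finset (Fin N)) (k : ℕ) (hk : 0 < k) :
    ∫ ω, min (k : ℝ) (∑ i ∈ S, yhat ω i) ∂μ
      ≥ (k : ℝ) * (1 - Real.exp (-(∑ i ∈ S, y i) / k)) := by
  have hk1 : (1 : ℝ) ≤ k := by exact_mod_cast hk
  have hk_inv : 0 ≤ (k : ℝ)⁻¹ ∧ (k : ℝ)⁻¹ ≤ 1 := ⟨by positivity, inv_le_one_of_one_le₀ hk1⟩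
  have hXm : ∀ i, Measurable fun ω => yhat ω i := fun i => hmeas.eval
  have hX : ∀ ω i, 0 ≤ yhat ω i ∧ yhat ω i ≤ 1 := fun ω i => by
    rcases h01 ω i with h | h <;> simp [h]
  have hexp : ∏ i ∈ S, (1 - (k : ℝ)⁻¹ * y i) ≤ Real.exp (-(∑ i ∈ S, y i) / k) := by
    convert S.prod_one_sub_le_exp_neg_sum fun i _ => ?_ using 2
    · rw [← Finset.mul_sum]; ring
    · exact mul_le_one₀ hk_inv.2 (hy i).1 (hy i).2
  calc (k : ℝ) * (1 - Real.exp (-(∑ i ∈ S, y i) / k))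
      ≤ k * (1 - ∫ ω, ∏ i ∈ S, (1 - (k : ℝ)⁻¹ * yhat ω i) ∂μ) := by
        gcongr
        exact (integral_prod_one_sub_mul_le hXm h01 (fun _ _ => hk_inv.1) (fun _ _ => hk_inv.2)
          (fun i _ => (hy i).2) (fun T _ => (hP3 T).2)).trans hexp
    _ ≤ ∫ ω, min (k : ℝ) (∑ i ∈ S, yhat ω i) ∂μ :=
      mul_one_sub_integral_prod_le_integral_min hXm hX S hk1

/-- For dependent rounding `ŷ` of `y ∈ [0,1]^N` — i.e. a `{0,1}`-valued random vector
satisfying (P1) marginals, (P2) sum-preservation, (P3) negative correlation — any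
`S ⊆ [N]` and positive integer `k` satisfy
`E[min{k, Σ_{i∈S} ŷ_i}] ≥ k (1 − exp(−(Σ_{i∈S} y_i)/k))`. -/
theorem stmt_14 {Ω : Type*} [MeasurableSpace Ω] (μ : Measure Ω) [IsProbabilityMeasure μ]
    (N : ℕ) (y : Fin N → ℝ) (hy : ∀ i, y i ∈ Set.Icc (0 : ℝ) 1)
    (yhat : Ω → Fin N → ℝ) (hmeas : Measurable yhat)
    (h01 : ∀ ω i, yhat ω i = 0 ∨ yhat ω i = 1)
    -- (P1) marginals
    (hP1 : ∀ i, μ {ω | yhat ω i = 1} = ENNReal.ofReal (y i))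
    -- (P2) sum-preservation
    (hP2 : ∀ᵐ ω ∂μ, (∑ i, yhat ω i) = (⌊∑ i, y i⌋ : ℝ) ∨ (∑ i, yhat ω i) = (⌈∑ i, y i⌉ : ℝ))
    -- (P3) negative correlation
    (hP3 : ∀ T : Finset (Fin N),
      μ {ω | ∀ i ∈ T, yhat ω i = 1} ≤ ENNReal.ofReal (∏ i ∈ T, y i) ∧
      μ {ω | ∀ i ∈ T, yhat ω i = 0} ≤ ENNReal.ofReal (∏ i ∈ T, (1 - y i)))
    (S : Finset (Fin N)) (k : ℕ) (hk : 0 < k) :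
    ∫ ω, min (k : ℝ) (∑ i ∈ S, yhat ω i) ∂μ
      ≥ (k : ℝ) * (1 - Real.exp (-(∑ i ∈ S, y i) / k)) :=
  stmt_14_general μ N y hy yhat hmeas h01 hP3 S k hk
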